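/- arXiv:2304.10589 — 3 statements merged into one kernel-verified Lean document; each statement's English description precedes it below -/
import Mathlib

section
/- For vectors u, v in ℝ^d and r ≥ 1, the pointwise monotonicity inequality (|u|^{r-1}u - |v|^{r-1}v)·(u - v) ≥ (1/2)|u|^{r-1}|u - v|² + (1/2)|v|^{r-1}|u - v|² holds. -/
open scoped InnerProductSpace

/-- Pointwise monotonicity of the Forchheimer damping nonlinearity. -/
theorem cbf_damping_monotone (d : ℕ) (r : ℝ) (hr : 1 ≤ r)
    (u v : EuclideanSpace ℝ (Fin d)) :
    ⟪(‖u‖ ^ (r - 1)) • u - (‖v‖ ^ (r - 1)) • v, u - v⟫_ℝ ≥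
      (1 / 2) * ‖u‖ ^ (r - 1) * ‖u - v‖ ^ 2 +
        (1 / 2) * ‖v‖ ^ (r - 1) * ‖u - v‖ ^ 2 := by
  have hre : (0:ℝ) ≤ r - 1 := by linarith
  have key : (‖u‖ ^ (r - 1) - ‖v‖ ^ (r - 1)) * (‖u‖ ^ 2 - ‖v‖ ^ 2) ≥ 0 := by
    rcases le_total ‖u‖ ‖v‖ with h | h
    · have h1 : ‖u‖ ^ (r - 1) ≤ ‖v‖ ^ (r - 1) :=
        Real.rpow_le_rpow (norm_nonneg _) h hre
      have h2 : ‖u‖ ^ 2 ≤ ‖v‖ ^ 2 := by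
        exact pow_le_pow_left₀ (norm_nonneg _) h 2
      nlinarith
    · have h1 : ‖v‖ ^ (r - 1) ≤ ‖u‖ ^ (r - 1) :=
        Real.rpow_le_rpow (norm_nonneg _) h hre
      have h2 : ‖v‖ ^ 2 ≤ ‖u‖ ^ 2 := by
        exact pow_le_pow_left₀ (norm_nonneg _) h 2
      nlinarith
  have hns : ‖u - v‖ ^ 2 = ‖u‖ ^ 2 - 2 * ⟪u, v⟫_ℝ + ‖v‖ ^ 2 := norm_sub_sq_real u v
  have hlhs : ⟪(‖u‖ ^ (r - 1)) • u - (‖v‖ ^ (r - 1)) • v, u - v⟫_ℝ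
      = ‖u‖ ^ (r - 1) * (‖u‖ ^ 2 - ⟪u, v⟫_ℝ) - ‖v‖ ^ (r - 1) * (⟪u, v⟫_ℝ - ‖v‖ ^ 2) := by
    simp only [inner_sub_left, inner_sub_right, real_inner_smul_left,
      real_inner_self_eq_norm_sq, real_inner_comm v u]
    ring
  rw [hlhs, hns]
  nlinarith [key]
end

section
/- Let y : [0,T] → [0,∞) be absolutely continuous with y'(t) ≤ -y(t)² + k(t) y(t) for an integrable nonnegative function k, and suppose y(0) > 0. Then for all t ∈ [0,T], y(t) ≤ y(0) exp(∫₀ᵗ k(s) ds) / (1 + y(0) ∫₀ᵗ exp(∫₀ˢ k(r) dr) ds). -/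
/-!
The bound is `Y = y₀ e^K / D` with `K = ∫₀ᵗ k` and `D = 1 + y₀ ∫₀ᵗ e^K`, the solution of the
Riccati equation `Y' = kY - Y²`, `Y 0 = y₀`. Since `D' = y₀ e^K = Y D`, it satisfies the integrated
logarithmic form `log Y b - log Y a = ∫ₐᵇ (k - Y)` even for merely integrable `k`, while wherever
the subsolution `y` is positive, `log y b - log y a ≤ ∫ₐᵇ (k - y)`. If `y t > Y t`, take the last
time `c < t` with `y c = Y c`; on `(c, t]` we have `y > Y > 0`, so the integrand `k - y` lies below
`k - Y` and `log y t ≤ log Y t`, a contradiction.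
-/

open Real Set MeasureTheory intervalIntegral

theorem exists_eq_forall_lt_of_le_of_lt {f g : ℝ → ℝ} {a b : ℝ} (hab : a ≤ b)
    (hf : ContinuousOn f (Icc a b)) (hg : ContinuousOn g (Icc a b))
    (ha : f a ≤ g a) (hb : g b < f b) :
    ∃ c ∈ Ico a b, f c = g c ∧ ∀ x ∈ Ioc c b, g x < f x := by
  have hclosed : ∀ {u v : ℝ → ℝ}, ContinuousOn u (Icc a b) → ContinuousOn v (Icc a b) →
      IsClosed (Icc a b ∩ (fun x => v x - u x) ⁻¹' Ici 0) := fun hu hv =>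
    (hv.sub hu).preimage_isClosed_of_isClosed isClosed_Icc isClosed_Ici
  set S := Icc a b ∩ (fun x => g x - f x) ⁻¹' Ici 0
  have hcS : sSup S ∈ S := (hclosed hf hg).csSup_mem
    ⟨a, ⟨left_mem_Icc.2 hab, sub_nonneg.2 ha⟩⟩ (bddAbove_Icc.mono inter_subset_left)
  set c := sSup S
  have hafter : ∀ x ∈ Ioc c b, g x < f x := fun x hx => by
    by_contra! hle
    exact (le_csSup (bddAbove_Icc.mono inter_subset_left)
      ⟨⟨hcS.1.1.trans hx.1.le, hx.2⟩, sub_nonneg.2 hle⟩).not_gt hx.1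
  have hcb : c < b := lt_of_le_of_ne hcS.1.2 fun h => hb.not_ge (by simpa [h] using hcS.2)
  have hge : g c ≤ f c := by
    have hsub : Ioc c b ⊆ Icc a b ∩ (fun x => f x - g x) ⁻¹' Ici 0 := fun x hx =>
      ⟨⟨hcS.1.1.trans hx.1.le, hx.2⟩, sub_nonneg.2 (hafter x hx).le⟩
    have hc := (hclosed hg hf).closure_subset_iff.2 hsub
      (by rw [closure_Ioc hcb.ne]; exact left_mem_Icc.2 hcb.le)
    exact sub_nonneg.1 hc.2
  exact ⟨c, ⟨hcS.1.1, hcb⟩, le_antisymm (sub_nonneg.1 hcS.2) hge, hafter⟩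

theorem log_sub_log_le_integral_of_hasDerivAt_le_mul {y y' φ : ℝ → ℝ} {a b : ℝ} (hab : a ≤ b)
    (hcont : ContinuousOn y (Icc a b)) (hpos : ∀ x ∈ Icc a b, 0 < y x)
    (hderiv : ∀ x ∈ Ioo a b, HasDerivAt y (y' x) x) (hφ : IntegrableOn φ (Icc a b))
    (hle : ∀ x ∈ Ioo a b, y' x ≤ φ x * y x) :
    log (y b) - log (y a) ≤ ∫ x in a..b, φ x :=
  sub_le_integral_of_hasDeriv_right_of_le (g := fun x => log (y x)) hab
    (hcont.log fun x hx => (hpos x hx).ne')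
    (fun x hx => ((hderiv x hx).log (hpos x (Ioo_subset_Icc_self hx)).ne').hasDerivWithinAt) hφ
    fun x hx => (div_le_iff₀ (hpos x (Ioo_subset_Icc_self hx))).2 (hle x hx)

noncomputable def riccatiDenom (y₀ : ℝ) (k : ℝ → ℝ) (t : ℝ) : ℝ :=
  1 + y₀ * ∫ s in (0 : ℝ)..t, exp (∫ r in (0 : ℝ)..s, k r)

noncomputable def riccatiSolution (y₀ : ℝ) (k : ℝ → ℝ) (t : ℝ) : ℝ :=
  y₀ * exp (∫ s in (0 : ℝ)..t, k s) / riccatiDenom y₀ k t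

section Riccati

variable {k : ℝ → ℝ} {T y₀ : ℝ}

theorem continuousOn_primitive_zero_Icc (hk : IntegrableOn k (Icc 0 T)) :
    ContinuousOn (fun t => ∫ s in (0 : ℝ)..t, k s) (Icc 0 T) := by
  rcases le_total 0 T with hT | hT
  · simpa [uIcc_of_le hT] using continuousOn_primitive_interval (a := 0) (b := T)
      (by rwa [uIcc_of_le hT])
  · exact (subsingleton_Icc_of_ge hT).continuousOn _

theorem continuousOn_exp_primitive_zero_Icc (hk : IntegrableOn k (Icc 0 T)) :
    ContinuousOn (fun t => exp (∫ s in (0 : ℝ)..t, k s)) (Icc 0 T) :=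
  continuous_exp.comp_continuousOn (continuousOn_primitive_zero_Icc hk)

theorem continuousOn_riccatiDenom (hk : IntegrableOn k (Icc 0 T)) :
    ContinuousOn (riccatiDenom y₀ k) (Icc 0 T) :=
  continuousOn_const.add (continuousOn_const.mul
    (continuousOn_primitive_zero_Icc (continuousOn_exp_primitive_zero_Icc hk).integrableOn_Icc))

theorem riccatiDenom_pos (hy₀ : 0 ≤ y₀) {t : ℝ} (ht : 0 ≤ t) : 0 < riccatiDenom y₀ k t :=
  add_pos_of_pos_of_nonneg one_pos (mul_nonneg hy₀ (integral_nonneg ht fun _ _ => (exp_pos _).le))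

theorem hasDerivAt_riccatiDenom (hk : IntegrableOn k (Icc 0 T)) {x : ℝ} (hx : x ∈ Ioo 0 T) :
    HasDerivAt (riccatiDenom y₀ k) (y₀ * exp (∫ s in (0 : ℝ)..x, k s)) x := by
  have hE := continuousOn_exp_primitive_zero_Icc hk
  have hint : IntervalIntegrable (fun t => exp (∫ s in (0 : ℝ)..t, k s)) volume 0 x :=
    (hE.mono (Icc_subset_Icc_right hx.2.le)).intervalIntegrable_of_Icc hx.1.le
  have hEx : ContinuousAt (fun t => exp (∫ s in (0 : ℝ)..t, k s)) x :=
    hE.continuousAt (Icc_mem_nhds hx.1 hx.2)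
  exact ((integral_hasDerivAt_right hint
    ((hE.mono Ioo_subset_Icc_self).stronglyMeasurableAtFilter isOpen_Ioo x hx) hEx).const_mul
      y₀).const_add 1

theorem riccatiSolution_zero : riccatiSolution y₀ k 0 = y₀ := by
  simp [riccatiSolution, riccatiDenom]

theorem riccatiSolution_pos (hy₀ : 0 < y₀) {t : ℝ} (ht : 0 ≤ t) : 0 < riccatiSolution y₀ k t :=
  div_pos (mul_pos hy₀ (exp_pos _)) (riccatiDenom_pos hy₀.le ht)

theorem continuousOn_riccatiSolution (hk : IntegrableOn k (Icc 0 T)) (hy₀ : 0 ≤ y₀) :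
    ContinuousOn (riccatiSolution y₀ k) (Icc 0 T) :=
  (continuousOn_const.mul (continuousOn_exp_primitive_zero_Icc hk)).div
    (continuousOn_riccatiDenom hk) fun _ ht => (riccatiDenom_pos hy₀ ht.1).ne'

theorem log_riccatiSolution_sub_log (hk : IntegrableOn k (Icc 0 T)) (hy₀ : 0 < y₀) {a b : ℝ}
    (ha : 0 ≤ a) (hab : a ≤ b) (hb : b ≤ T) :
    log (riccatiSolution y₀ k b) - log (riccatiSolution y₀ k a) =
      ∫ x in a..b, (k x - riccatiSolution y₀ k x) := by
  have hsub : Icc a b ⊆ Icc 0 T := Icc_subset_Icc ha hb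
  have hlog : ∀ t, 0 ≤ t → log (riccatiSolution y₀ k t) =
      log y₀ + (∫ s in (0 : ℝ)..t, k s) - log (riccatiDenom y₀ k t) := fun t ht => by
    rw [riccatiSolution, log_div (mul_pos hy₀ (exp_pos _)).ne' (riccatiDenom_pos hy₀.le ht).ne',
      log_mul hy₀.ne' (exp_pos _).ne', log_exp]
  have hkI : ∀ {u v}, 0 ≤ u → u ≤ v → v ≤ T → IntervalIntegrable k volume u v := fun hu huv hv =>
    (intervalIntegrable_iff_integrableOn_Icc_of_le huv).2 (hk.mono_set (Icc_subset_Icc hu hv))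
  have hK : (∫ s in (0 : ℝ)..b, k s) - ∫ s in (0 : ℝ)..a, k s = ∫ s in a..b, k s :=
    integral_interval_sub_left (hkI le_rfl (ha.trans hab) hb) (hkI le_rfl ha (hab.trans hb))
  have hYab : IntervalIntegrable (riccatiSolution y₀ k) volume a b :=
    ((continuousOn_riccatiSolution hk hy₀.le).mono hsub).intervalIntegrable_of_Icc hab
  have hlogD : ∫ x in a..b, riccatiSolution y₀ k x =
      log (riccatiDenom y₀ k b) - log (riccatiDenom y₀ k a) := by
    refine integral_eq_sub_of_hasDerivAt_of_le hab (((continuousOn_riccatiDenom hk).mono hsub).log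
      fun t ht => (riccatiDenom_pos hy₀.le (ha.trans ht.1)).ne') (fun x hx => ?_) hYab
    exact (hasDerivAt_riccatiDenom hk ⟨ha.trans_lt hx.1, hx.2.trans_le hb⟩).log
      (riccatiDenom_pos hy₀.le (ha.trans hx.1.le)).ne'
  rw [integral_sub (hkI ha hab hb) hYab, hlog b (ha.trans hab), hlog a ha, ← hK, hlogD]
  ring

end Riccati

theorem log_sub_log_le_integral_of_riccati {y y' k : ℝ → ℝ} {a b : ℝ} (hab : a ≤ b)
    (hpos : ∀ x ∈ Icc a b, 0 < y x) (hderiv : ∀ x ∈ Icc a b, HasDerivAt y (y' x) x)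
    (hk : IntegrableOn k (Icc a b)) (hineq : ∀ x ∈ Ioo a b, y' x ≤ -(y x) ^ 2 + k x * y x) :
    log (y b) - log (y a) ≤ ∫ x in a..b, (k x - y x) := by
  have hy : ContinuousOn y (Icc a b) := fun x hx => (hderiv x hx).continuousAt.continuousWithinAt
  exact log_sub_log_le_integral_of_hasDerivAt_le_mul hab hy hpos
    (fun x hx => hderiv x (Ioo_subset_Icc_self hx)) (hk.sub hy.integrableOn_Icc)
    fun x hx => by linear_combination hineq x hx

theorem riccati_inequality_bound_general (T : ℝ) (y y' k : ℝ → ℝ)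
    (hy0 : 0 < y 0)
    (hkint : MeasureTheory.IntegrableOn k (Set.Icc 0 T))
    (hderiv : ∀ t ∈ Set.Icc (0 : ℝ) T, HasDerivAt y (y' t) t)
    (hineq : ∀ t ∈ Set.Icc (0 : ℝ) T, y' t ≤ -(y t) ^ 2 + k t * y t) :
    ∀ t ∈ Set.Icc (0 : ℝ) T,
      y t ≤ y 0 * Real.exp (∫ s in (0 : ℝ)..t, k s) /
        (1 + y 0 * ∫ s in (0 : ℝ)..t, Real.exp (∫ r in (0 : ℝ)..s, k r)) := by
  intro t ht
  change y t ≤ riccatiSolution (y 0) k t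
  by_contra! hlt
  have hsub : Icc 0 t ⊆ Icc 0 T := Icc_subset_Icc_right ht.2
  have hY := continuousOn_riccatiSolution hkint hy0.le
  have hy : ContinuousOn y (Icc 0 T) := fun x hx => (hderiv x hx).continuousAt.continuousWithinAt
  obtain ⟨c, hc, hyc, hYy⟩ := exists_eq_forall_lt_of_le_of_lt ht.1 (hy.mono hsub) (hY.mono hsub)
    riccatiSolution_zero.ge hlt
  have hcT : Icc c t ⊆ Icc 0 T := (Icc_subset_Icc_left hc.1).trans hsub
  have hYpos : ∀ x ∈ Icc c t, 0 < riccatiSolution (y 0) k x := fun x hx =>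
    riccatiSolution_pos hy0 (hc.1.trans hx.1)
  have hYle : ∀ x ∈ Icc c t, riccatiSolution (y 0) k x ≤ y x := fun x hx =>
    hx.1.eq_or_lt.elim (fun h => h ▸ hyc.ge) fun h => (hYy x ⟨h, hx.2⟩).le
  have hlog_y := log_sub_log_le_integral_of_riccati hc.2.le
    (fun x hx => (hYpos x hx).trans_le (hYle x hx)) (fun x hx => hderiv x (hcT hx))
    (hkint.mono_set hcT) fun x hx => hineq x (hcT (Ioo_subset_Icc_self hx))
  have hlog_Y := log_riccatiSolution_sub_log hkint hy0 hc.1 hc.2.le ht.2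
  have hint_le : ∫ x in c..t, (k x - y x) ≤ ∫ x in c..t, (k x - riccatiSolution (y 0) k x) :=
    have hk := (intervalIntegrable_iff_integrableOn_Icc_of_le hc.2.le).2 (hkint.mono_set hcT)
    integral_mono_on hc.2.le (hk.sub ((hy.mono hcT).intervalIntegrable_of_Icc hc.2.le))
      (hk.sub ((hY.mono hcT).intervalIntegrable_of_Icc hc.2.le))
      fun x hx => sub_le_sub_left (hYle x hx) _
  have hYt := hYpos t ⟨hc.2.le, le_rfl⟩
  refine hlt.not_ge ((log_le_log_iff (hYt.trans hlt) hYt).1 ?_)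
  rw [hyc] at hlog_y
  linarith

/-- Riccati-type differential inequality bound via the substitution `v = 1/y`. -/
theorem riccati_inequality_bound (T : ℝ) (hT : 0 ≤ T) (y y' k : ℝ → ℝ)
    (hy0 : 0 < y 0)
    (hnonneg : ∀ t ∈ Set.Icc (0 : ℝ) T, 0 ≤ y t)
    (hknn : ∀ t ∈ Set.Icc (0 : ℝ) T, 0 ≤ k t)
    (hkint : MeasureTheory.IntegrableOn k (Set.Icc 0 T))
    (hderiv : ∀ t ∈ Set.Icc (0 : ℝ) T, HasDerivAt y (y' t) t)
    (hineq : ∀ t ∈ Set.Icc (0 : ℝ) T, y' t ≤ -(y t) ^ 2 + k t * y t) :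
    ∀ t ∈ Set.Icc (0 : ℝ) T,
      y t ≤ y 0 * Real.exp (∫ s in (0 : ℝ)..t, k s) /
        (1 + y 0 * ∫ s in (0 : ℝ)..t, Real.exp (∫ r in (0 : ℝ)..s, k r)) :=
  riccati_inequality_bound_general T y y' k hy0 hkint hderiv hineq
end

section
/- Let u : ℝ^d × [0,T] → ℝ^d be a time-dependent vector field satisfying the log-Lipschitz bound |u(x,t) - u(y,t)| ≤ g(t) |x-y| (-log|x-y|)^{1/2} for all x ≠ y with |x - y| < 1, where g is integrable on [0,T]. If X and Y solve Z'(t) = u(Z(t),t) with |X(t₀) - Y(t₀)| < 1 and X(t₀) ≠ Y(t₀), then for all t ∈ [t₀,T] with |X(t)-Y(t)| < 1: (-log|X(t)-Y(t)|)^{1/2} ≤ (-log|X(t₀)-Y(t₀)|)^{1/2} + C∫_{t₀}^{t} g(s) ds for an absolute constant C; in particular X(t) ≠ Y(t). -/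
open MeasureTheory Set intervalIntegral Topology Filter

local notation "⟪" x ", " y "⟫" => @inner ℝ _ _ x y

lemma osgood_step {E : Type*} [NormedAddCommGroup E] [InnerProductSpace ℝ E]
    {t₀ T : ℝ} {g : ℝ → ℝ} {W W' : ℝ → E}
    (hW : ∀ s ∈ Icc t₀ T, HasDerivAt W (W' s) s)
    (hb : ∀ s ∈ Icc t₀ T, W s ≠ 0 → ‖W s‖ < 1 →
      ‖W' s‖ ≤ g s * ‖W s‖ * Real.sqrt (-Real.log ‖W s‖))
    (hg : IntegrableOn g (Icc t₀ T))
    {a b : ℝ} (hab : a ≤ b) (hsub : Icc a b ⊆ Icc t₀ T)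
    (hgood : ∀ s ∈ Icc a b, W s ≠ 0 ∧ ‖W s‖ < 1) :
    Real.sqrt (-Real.log ‖W b‖) ≤
      Real.sqrt (-Real.log ‖W a‖) + (1/2) * ∫ s in a..b, g s := by
  set ψ : ℝ → ℝ := fun s => Real.sqrt (-(Real.log ⟪W s, W s⟫) / 2) with hψdef
  have hψeq : ∀ s, ψ s = Real.sqrt (-Real.log ‖W s‖) := by
    intro s
    have h1 : (⟪W s, W s⟫ : ℝ) = ‖W s‖ ^ 2 := real_inner_self_eq_norm_sq _
    have h2 : -Real.log (‖W s‖ ^ 2) / 2 = -Real.log ‖W s‖ := by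
      rw [Real.log_pow]; push_cast; ring
    rw [hψdef]; simp only [h1, h2]
  -- derivative of ψ at points of Icc a b
  have key : ∀ s ∈ Icc a b, HasDerivAt ψ (deriv ψ s) s ∧ |deriv ψ s| ≤ g s / 2 := by
    intro s hs
    have hsT : s ∈ Icc t₀ T := hsub hs
    have hW0 : W s ≠ 0 := (hgood s hs).1
    have hφpos : (0:ℝ) < ‖W s‖ := norm_pos_iff.2 hW0
    have hφlt : ‖W s‖ < 1 := (hgood s hs).2
    have hq : (⟪W s, W s⟫ : ℝ) = ‖W s‖ ^ 2 := real_inner_self_eq_norm_sq _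
    have hqpos : (0:ℝ) < ⟪W s, W s⟫ := by rw [hq]; exact pow_pos hφpos 2
    have hlogneg : Real.log ⟪W s, W s⟫ < 0 := by
      apply Real.log_neg hqpos
      rw [real_inner_self_eq_norm_sq]
      nlinarith
    have harg : (0:ℝ) < -(Real.log ⟪W s, W s⟫) / 2 := by linarith
    have hinner : HasDerivAt (fun t => (⟪W t, W t⟫ : ℝ))
        (⟪W s, W' s⟫ + ⟪W' s, W s⟫) s :=
      HasDerivAt.inner ℝ (hW s hsT) (hW s hsT)
    have hv : HasDerivAt (fun t => -(Real.log ⟪W t, W t⟫) / 2)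
        (-((⟪W s, W' s⟫ + ⟪W' s, W s⟫) / ⟪W s, W s⟫) / 2) s :=
      ((hinner.log hqpos.ne').neg).div_const 2
    have hψd : HasDerivAt ψ
        ((1 / (2 * Real.sqrt (-(Real.log ⟪W s, W s⟫) / 2))) *
          (-((⟪W s, W' s⟫ + ⟪W' s, W s⟫) / ⟪W s, W s⟫) / 2)) s :=
      (Real.hasDerivAt_sqrt harg.ne').comp s hv
    have hderiv_eq := hψd.deriv
    refine ⟨hderiv_eq ▸ hψd, ?_⟩
    have hΨpos : 0 < Real.sqrt (-Real.log ‖W s‖) := by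
      apply Real.sqrt_pos.2
      have := Real.log_neg hφpos hφlt; linarith
    have h2s : -Real.log (‖W s‖ ^ 2) / 2 = -Real.log ‖W s‖ := by
      rw [Real.log_pow]; push_cast; ring
    have hD : |(⟪W s, W' s⟫ + ⟪W' s, W s⟫ : ℝ)| ≤ 2 * (‖W s‖ * ‖W' s‖) := by
      have h1 := abs_real_inner_le_norm (W s) (W' s)
      have h2 := abs_real_inner_le_norm (W' s) (W s)
      calc |(⟪W s, W' s⟫ + ⟪W' s, W s⟫ : ℝ)| ≤ |(⟪W s, W' s⟫ : ℝ)| + |(⟪W' s, W s⟫ : ℝ)| :=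
            abs_add_le _ _
        _ ≤ 2 * (‖W s‖ * ‖W' s‖) := by nlinarith [norm_nonneg (W s), norm_nonneg (W' s)]
    have hvb : ‖W' s‖ ≤ g s * ‖W s‖ * Real.sqrt (-Real.log ‖W s‖) := hb s hsT hW0 hφlt
    have hval : deriv ψ s = -((⟪W s, W' s⟫ + ⟪W' s, W s⟫ : ℝ) /
        (4 * Real.sqrt (-Real.log ‖W s‖) * ‖W s‖ ^ 2)) := by
      rw [hderiv_eq, hq, h2s]
      field_simp
      ring_nf
      try exact Or.inl trivial
    rw [hval, abs_neg, abs_div,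
      abs_of_pos (show (0:ℝ) < 4 * Real.sqrt (-Real.log ‖W s‖) * ‖W s‖ ^ 2 by positivity),
      div_le_div_iff₀ (by positivity) (by norm_num : (0:ℝ) < 2)]
    nlinarith [hD, hvb, hφpos, hΨpos, norm_nonneg (W' s),
      abs_nonneg (⟪W s, W' s⟫ + ⟪W' s, W s⟫ : ℝ)]
  have hIoc : uIoc a b = Ioc a b := uIoc_of_le hab
  have hgOn : IntegrableOn g (Ioc a b) := hg.mono_set (Ioc_subset_Icc_self.trans hsub)
  have hgint : IntervalIntegrable g volume a b := by
    rw [intervalIntegrable_iff, hIoc]; exact hgOn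
  have hg2int : IntervalIntegrable (fun s => g s / 2) volume a b := hgint.div_const 2
  have hdint : IntervalIntegrable (deriv ψ) volume a b := by
    rw [intervalIntegrable_iff, hIoc]
    apply Integrable.mono' (hgOn.div_const 2)
    · exact (measurable_deriv ψ).aestronglyMeasurable.restrict
    · rw [ae_restrict_iff' measurableSet_Ioc]
      filter_upwards with s hs
      rw [Real.norm_eq_abs]
      exact (key s (Ioc_subset_Icc_self hs)).2
  have hFTC : ∫ s in a..b, deriv ψ s = ψ b - ψ a :=
    intervalIntegral.integral_eq_sub_of_hasDerivAt
      (fun x hx => (key x (by rwa [uIcc_of_le hab] at hx)).1) hdint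
  have hmono : ∫ s in a..b, deriv ψ s ≤ ∫ s in a..b, g s / 2 :=
    intervalIntegral.integral_mono_on hab hdint hg2int
      (fun x hx => (le_abs_self _).trans (key x hx).2)
  rw [intervalIntegral.integral_div] at hmono
  have := hψeq a
  have := hψeq b
  rw [hFTC] at hmono
  rw [← hψeq a, ← hψeq b]
  linarith

lemma osgood_novanish {E : Type*} [NormedAddCommGroup E] [InnerProductSpace ℝ E]
    {t₀ T : ℝ} {g : ℝ → ℝ} {W W' : ℝ → E}
    (hW : ∀ s ∈ Icc t₀ T, HasDerivAt W (W' s) s)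
    (hb : ∀ s ∈ Icc t₀ T, W s ≠ 0 → ‖W s‖ < 1 →
      ‖W' s‖ ≤ g s * ‖W s‖ * Real.sqrt (-Real.log ‖W s‖))
    (hg : IntegrableOn g (Icc t₀ T))
    (hgpos : ∀ s ∈ Icc t₀ T, 0 ≤ g s)
    {a c : ℝ} (ha : t₀ ≤ a) (hac : a < c) (hcT : c ≤ T)
    (hgood : ∀ s ∈ Ico a c, W s ≠ 0 ∧ ‖W s‖ < 1) : W c ≠ 0 := by
  have ht₀T : t₀ ≤ T := le_trans ha (le_trans hac.le hcT)
  have hgint : IntervalIntegrable g volume t₀ T := by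
    rw [intervalIntegrable_iff, uIoc_of_le ht₀T]; exact hg.mono_set Ioc_subset_Icc_self
  have hInonneg : 0 ≤ ∫ s in t₀..T, g s :=
    intervalIntegral.integral_nonneg ht₀T (fun x hx => hgpos x hx)
  set M : ℝ := Real.sqrt (-Real.log ‖W a‖) + (1/2) * ∫ s in t₀..T, g s with hMdef
  have hM0 : 0 ≤ M := by positivity
  have hlow : ∀ s ∈ Ico a c, Real.exp (-(M^2)) ≤ ‖W s‖ := by
    intro s hs
    have hsub : Icc a s ⊆ Icc t₀ T := fun r hr =>
      ⟨le_trans ha hr.1, le_trans hr.2 (le_trans (le_of_lt hs.2) hcT)⟩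
    have hgood' : ∀ r ∈ Icc a s, W r ≠ 0 ∧ ‖W r‖ < 1 := fun r hr =>
      hgood r ⟨hr.1, lt_of_le_of_lt hr.2 hs.2⟩
    have h1 := osgood_step hW hb hg hs.1 hsub hgood'
    have h2 : (∫ r in a..s, g r) ≤ ∫ r in t₀..T, g r := by
      apply intervalIntegral.integral_mono_interval ha hs.1
        (le_trans (le_of_lt hs.2) hcT) _ hgint
      exact ae_restrict_of_forall_mem measurableSet_Ioc
        (fun x hx => hgpos x (Ioc_subset_Icc_self hx))
    have hsM : Real.sqrt (-Real.log ‖W s‖) ≤ M := by rw [hMdef]; linarith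
    have hWpos : 0 < ‖W s‖ := norm_pos_iff.2 (hgood s hs).1
    have hloglt : Real.log ‖W s‖ < 0 := Real.log_neg hWpos (hgood s hs).2
    have hx : -Real.log ‖W s‖ ≤ M^2 := by
      have := Real.sq_sqrt (le_of_lt (by linarith : (0:ℝ) < -Real.log ‖W s‖))
      nlinarith [Real.sqrt_nonneg (-Real.log ‖W s‖)]
    calc Real.exp (-(M^2)) ≤ Real.exp (Real.log ‖W s‖) := Real.exp_le_exp.2 (by linarith)
      _ = ‖W s‖ := Real.exp_log hWpos
  intro hc0
  have hcT' : c ∈ Icc t₀ T := ⟨le_trans ha hac.le, hcT⟩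
  have hcont : ContinuousWithinAt (fun s => ‖W s‖) (Ico a c) c :=
    ((hW c hcT').continuousAt.norm).continuousWithinAt
  haveI hneb : (𝓝[Ico a c] c).NeBot := by
    apply mem_closure_iff_nhdsWithin_neBot.1
    rw [closure_Ico hac.ne]
    exact ⟨hac.le, le_rfl⟩
  have hge : Real.exp (-(M^2)) ≤ ‖W c‖ :=
    ge_of_tendsto hcont.tendsto (eventually_mem_nhdsWithin.mono (fun x hx => hlow x hx))
  rw [hc0, norm_zero] at hge
  exact absurd hge (not_le.2 (Real.exp_pos _))

/-- Osgood-type estimate: uniqueness of particle trajectories for a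
log-Lipschitz velocity field. -/
theorem lagrangian_trajectories_logLipschitz :
    ∃ C : ℝ, 0 < C ∧
      ∀ (d : ℕ) (T t₀ : ℝ), t₀ ≤ T →
        ∀ (u : ℝ → EuclideanSpace ℝ (Fin d) → EuclideanSpace ℝ (Fin d)) (g : ℝ → ℝ),
        (∀ t ∈ Set.Icc t₀ T, ∀ x y : EuclideanSpace ℝ (Fin d), x ≠ y → ‖x - y‖ < 1 →
          ‖u t x - u t y‖ ≤ g t * ‖x - y‖ * Real.sqrt (-Real.log ‖x - y‖)) →
        MeasureTheory.IntegrableOn g (Set.Icc t₀ T) →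
        ∀ X Y : ℝ → EuclideanSpace ℝ (Fin d),
        (∀ t ∈ Set.Icc t₀ T, HasDerivAt X (u t (X t)) t) →
        (∀ t ∈ Set.Icc t₀ T, HasDerivAt Y (u t (Y t)) t) →
        ‖X t₀ - Y t₀‖ < 1 → X t₀ ≠ Y t₀ →
        ∀ t ∈ Set.Icc t₀ T, ‖X t - Y t‖ < 1 →
          Real.sqrt (-Real.log ‖X t - Y t‖) ≤
              Real.sqrt (-Real.log ‖X t₀ - Y t₀‖) + C * ∫ s in t₀..t, g s ∧
            X t ≠ Y t := by
  refine ⟨1/2, by norm_num, ?_⟩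
  intro d T t₀ hTt u g hu hg X Y hX hY h01 hne0 t ht ht1
  set W : ℝ → EuclideanSpace ℝ (Fin d) := fun s => X s - Y s with hWdef
  set W' : ℝ → EuclideanSpace ℝ (Fin d) := fun s => u s (X s) - u s (Y s) with hW'def
  have hW : ∀ s ∈ Icc t₀ T, HasDerivAt W (W' s) s := fun s hs => (hX s hs).sub (hY s hs)
  have hb : ∀ s ∈ Icc t₀ T, W s ≠ 0 → ‖W s‖ < 1 →
      ‖W' s‖ ≤ g s * ‖W s‖ * Real.sqrt (-Real.log ‖W s‖) := by
    intro s hs h0 h1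
    exact hu s hs (X s) (Y s) (sub_ne_zero.1 h0) h1
  have hWt₀ : W t₀ ≠ 0 := sub_ne_zero.2 hne0
  -- nonnegativity of g on [t₀, T]
  have hgpos : ∀ s ∈ Icc t₀ T, 0 ≤ g s := by
    intro s hs
    set v := W t₀ with hv
    have hvn : (0:ℝ) < ‖v‖ := norm_pos_iff.2 hWt₀
    set x : EuclideanSpace ℝ (Fin d) := (1/(2*‖v‖)) • v with hx
    have hxn : ‖x - 0‖ = 1/2 := by
      rw [sub_zero, hx, norm_smul, Real.norm_eq_abs, abs_of_pos (by positivity)]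
      field_simp
    have hx0 : x ≠ 0 := by
      intro h; rw [h] at hxn; simp at hxn
    have hlog : Real.sqrt (-Real.log (1/2)) = Real.sqrt (Real.log 2) := by
      rw [one_div, Real.log_inv, neg_neg]
    have hsq : 0 < Real.sqrt (Real.log 2) :=
      Real.sqrt_pos.2 (Real.log_pos one_lt_two)
    have := hu s hs x 0 hx0 (by rw [hxn]; norm_num)
    rw [hxn, hlog] at this
    nlinarith [norm_nonneg (u s x - u s 0)]
  have htt : t₀ ≤ t := ht.1
  have hsub0 : Icc t₀ t ⊆ Icc t₀ T := fun r hr => ⟨hr.1, le_trans hr.2 ht.2⟩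
  by_cases hcase : ∀ s ∈ Icc t₀ t, ‖W s‖ < 1
  · -- Case A : norm stays below 1 on the whole interval
    have hnz : ∀ s ∈ Icc t₀ t, W s ≠ 0 := by
      by_contra h
      push_neg at h
      obtain ⟨ρ, hρ, hρ0⟩ := h
      set Z : Set ℝ := Icc t₀ t ∩ W ⁻¹' {0} with hZ
      have hZc : IsClosed Z := by
        apply ContinuousOn.preimage_isClosed_of_isClosed
          (fun r hr => (hW r (hsub0 hr)).continuousAt.continuousWithinAt)
          isClosed_Icc isClosed_singleton
      have hZne : Z.Nonempty := ⟨ρ, hρ, hρ0⟩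
      have hZbdd : BddBelow Z := ⟨t₀, fun r hr => hr.1.1⟩
      have hτ := hZc.csInf_mem hZne hZbdd
      set τ := sInf Z with hτdef
      have hτ0 : W τ = 0 := hτ.2
      have hτI : τ ∈ Icc t₀ t := hτ.1
      have hτne : τ ≠ t₀ := fun h => hWt₀ (h ▸ hτ0)
      have hτgt : t₀ < τ := lt_of_le_of_ne hτI.1 (Ne.symm hτne)
      refine osgood_novanish hW hb hg hgpos le_rfl hτgt (le_trans hτI.2 ht.2) ?_ hτ0
      intro r hr
      constructor
      · intro h0
        have : r ∈ Z := ⟨⟨hr.1, le_trans hr.2.le hτI.2⟩, h0⟩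
        exact absurd (csInf_le hZbdd this) (not_le.2 hr.2)
      · exact hcase r ⟨hr.1, le_trans hr.2.le hτI.2⟩
    have hWt : W t ≠ 0 := hnz t ⟨htt, le_rfl⟩
    refine ⟨?_, sub_ne_zero.1 hWt⟩
    exact osgood_step hW hb hg htt hsub0 (fun s hs => ⟨hnz s hs, hcase s hs⟩)
  · -- Case B : the norm reaches 1 somewhere in the interval
    push_neg at hcase
    obtain ⟨s₁, hs₁, hs₁1⟩ := hcase
    set S : Set ℝ := Icc t₀ t ∩ (fun r => ‖W r‖) ⁻¹' Ici 1 with hS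
    have hSc : IsClosed S :=
      ContinuousOn.preimage_isClosed_of_isClosed
        (fun r hr => (hW r (hsub0 hr)).continuousAt.norm.continuousWithinAt)
        isClosed_Icc isClosed_Ici
    have hSne : S.Nonempty := ⟨s₁, hs₁, hs₁1⟩
    have hSbdd : BddAbove S := ⟨t, fun r hr => hr.1.2⟩
    have hσ := hSc.csSup_mem hSne hSbdd
    set σ := sSup S with hσdef
    have hσI : σ ∈ Icc t₀ t := hσ.1
    have hσ1 : 1 ≤ ‖W σ‖ := hσ.2
    have hσne : σ ≠ t := fun h => absurd (h ▸ hσ1) (not_le.2 ht1)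
    have hσlt : σ < t := lt_of_le_of_ne hσI.2 hσne
    have hσT : σ ∈ Icc t₀ T := hsub0 hσI
    have hlt1 : ∀ r ∈ Ioc σ t, ‖W r‖ < 1 := by
      intro r hr
      by_contra h
      push_neg at h
      have : r ∈ S := ⟨⟨le_trans hσI.1 hr.1.le, hr.2⟩, h⟩
      exact absurd (le_csSup hSbdd this) (not_le.2 hr.1)
    have hnz : ∀ r ∈ Ioc σ t, W r ≠ 0 := by
      by_contra h
      push_neg at h
      obtain ⟨ρ, hρ, hρ0⟩ := h
      set Z : Set ℝ := Icc σ t ∩ W ⁻¹' {0} with hZ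
      have hZc : IsClosed Z := by
        apply ContinuousOn.preimage_isClosed_of_isClosed
          (fun r hr => (hW r ⟨le_trans hσI.1 hr.1, le_trans hr.2 ht.2⟩).continuousAt.continuousWithinAt)
          isClosed_Icc isClosed_singleton
      have hZne : Z.Nonempty := ⟨ρ, ⟨hρ.1.le, hρ.2⟩, hρ0⟩
      have hZbdd : BddBelow Z := ⟨σ, fun r hr => hr.1.1⟩
      have hτ := hZc.csInf_mem hZne hZbdd
      set τ := sInf Z with hτdef
      have hτ0 : W τ = 0 := hτ.2
      have hτI : τ ∈ Icc σ t := hτ.1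
      have hτne : τ ≠ σ := by
        intro h
        rw [h] at hτ0
        rw [hτ0, norm_zero] at hσ1
        linarith
      have hτgt : σ < τ := lt_of_le_of_ne hτI.1 (Ne.symm hτne)
      set a := (σ + τ)/2 with hadef
      have ha1 : σ < a := by rw [hadef]; linarith
      have ha2 : a < τ := by rw [hadef]; linarith
      refine osgood_novanish hW hb hg hgpos (le_trans hσI.1 ha1.le) ha2
        (le_trans hτI.2 ht.2) ?_ hτ0
      intro r hr
      have hrI : r ∈ Ioc σ t := ⟨lt_of_lt_of_le ha1 hr.1, le_trans hr.2.le hτI.2⟩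
      constructor
      · intro h0
        have : r ∈ Z := ⟨⟨hrI.1.le, hrI.2⟩, h0⟩
        exact absurd (csInf_le hZbdd this) (not_le.2 hr.2)
      · exact hlt1 r hrI
    have hWt : W t ≠ 0 := hnz t ⟨hσlt, le_rfl⟩
    refine ⟨?_, sub_ne_zero.1 hWt⟩
    -- ‖W σ‖ = 1
    have hσeq : ‖W σ‖ = 1 := by
      refine le_antisymm ?_ hσ1
      haveI : (𝓝[Ioc σ t] σ).NeBot := by
        apply mem_closure_iff_nhdsWithin_neBot.1
        rw [closure_Ioc hσne]
        exact ⟨le_rfl, hσlt.le⟩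
      exact le_of_tendsto ((hW σ hσT).continuousAt.norm.continuousWithinAt.tendsto)
        (eventually_mem_nhdsWithin.mono (fun r hr => (hlt1 r hr).le))
    -- the estimate via ε-argument
    by_contra hcon
    push_neg at hcon
    set ε := (Real.sqrt (-Real.log ‖W t‖) -
      (Real.sqrt (-Real.log ‖W t₀‖) + 1/2 * ∫ s in t₀..t, g s)) with hεdef
    have hε : 0 < ε := by
      rw [hεdef]
      have hcon' : Real.sqrt (-Real.log ‖W t₀‖) + 1/2 * ∫ s in t₀..t, g s <
          Real.sqrt (-Real.log ‖W t‖) := hcon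
      linarith
    haveI : (𝓝[Ioc σ t] σ).NeBot := by
      apply mem_closure_iff_nhdsWithin_neBot.1
      rw [closure_Ioc hσne]
      exact ⟨le_rfl, hσlt.le⟩
    have hFc : ContinuousAt (fun r => Real.sqrt (-Real.log ‖W r‖)) σ := by
      apply Real.continuous_sqrt.continuousAt.comp
      apply ContinuousAt.neg
      exact (Real.continuousAt_log (by rw [hσeq]; norm_num)).comp (hW σ hσT).continuousAt.norm
    have hF0 : Real.sqrt (-Real.log ‖W σ‖) = 0 := by
      rw [hσeq, Real.log_one, neg_zero, Real.sqrt_zero]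
    have hev : ∀ᶠ r in 𝓝[Ioc σ t] σ, Real.sqrt (-Real.log ‖W r‖) < ε := by
      have : Tendsto (fun r => Real.sqrt (-Real.log ‖W r‖)) (𝓝[Ioc σ t] σ) (𝓝 0) := by
        rw [← hF0]
        exact hFc.continuousWithinAt.tendsto
      exact this (Iio_mem_nhds hε)
    obtain ⟨a, hav, haI⟩ := (hev.and eventually_mem_nhdsWithin).exists
    -- apply the step lemma on [a, t]
    have hstep := osgood_step hW hb hg haI.2
      (fun r hr => ⟨le_trans hσT.1 (le_trans haI.1.le hr.1), le_trans hr.2 ht.2⟩)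
      (fun r hr => ⟨hnz r ⟨lt_of_lt_of_le haI.1 hr.1, hr.2⟩,
        hlt1 r ⟨lt_of_lt_of_le haI.1 hr.1, hr.2⟩⟩)
    have hgint : IntervalIntegrable g volume t₀ t := by
      rw [intervalIntegrable_iff, uIoc_of_le htt]
      exact hg.mono_set (fun r hr => hsub0 (Ioc_subset_Icc_self hr))
    have hImono : (∫ s in a..t, g s) ≤ ∫ s in t₀..t, g s := by
      apply intervalIntegral.integral_mono_interval (le_trans hσI.1 haI.1.le) haI.2 le_rfl
        _ hgint
      exact ae_restrict_of_forall_mem measurableSet_Ioc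
        (fun r hr => hgpos r (hsub0 (Ioc_subset_Icc_self hr)))
    have hψ0 : 0 ≤ Real.sqrt (-Real.log ‖W t₀‖) := Real.sqrt_nonneg _
    have hcon' : Real.sqrt (-Real.log ‖W t₀‖) + 1/2 * ∫ s in t₀..t, g s <
        Real.sqrt (-Real.log ‖W t‖) := hcon
    have hav' : Real.sqrt (-Real.log ‖W a‖) < ε := hav
    clear_value ε
    have : Real.sqrt (-Real.log ‖W t‖) < Real.sqrt (-Real.log ‖W t‖) := by
      calc Real.sqrt (-Real.log ‖W t‖)
          ≤ Real.sqrt (-Real.log ‖W a‖) + (1/2) * ∫ s in a..t, g s := hstep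
        _ < ε + (1/2) * ∫ s in t₀..t, g s := by
            have : (1/2) * (∫ s in a..t, g s) ≤ (1/2) * ∫ s in t₀..t, g s := by linarith
            linarith
        _ ≤ Real.sqrt (-Real.log ‖W t‖) := by
            have hεeq : ε = Real.sqrt (-Real.log ‖W t‖) -
              (Real.sqrt (-Real.log ‖W t₀‖) + 1/2 * ∫ s in t₀..t, g s) := hεdef
            linarith
    exact absurd this (lt_irrefl _)
end
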